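/- The set à of 4-tuples (x₁,x₂,x₃,x₄) ∈ (ℝ²)⁴ of pairwise distinct points satisfying ‖x₁-x₂‖ = ‖x₂-x₃‖ = ‖x₃-x₄‖ = ‖x₄-x₁‖ and ‖x₁-x₃‖ = ‖x₂-x₄‖ is exactly the set of 4-tuples that are vertices of a (nondegenerate) square listed in cyclic order, and à is a smooth 4-dimensional submanifold of ℝ⁸. -/
import Mathlib


open Complex

private lemma dist_eq_of_normSq {z w z' w' : ℂ}
    (h : Complex.normSq (z - w) = Complex.normSq (z' - w')) :
    dist z w = dist z' w' := by
  rw [Complex.dist_eq, Complex.dist_eq, Complex.norm_def, Complex.norm_def, h]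

private lemma normSq_eq_of_dist {z w z' w' : ℂ}
    (h : dist z w = dist z' w') :
    Complex.normSq (z - w) = Complex.normSq (z' - w') := by
  have := congrArg (fun t => t ^ 2) h
  simpa [Complex.dist_eq, Complex.sq_norm] using this

private lemma exists_real_of_perp {u w : ℂ} (hu : u ≠ 0)
    (h : u.re * w.re + u.im * w.im = 0) :
    ∃ a : ℝ, w = (a : ℝ) * Complex.I * u := by
  refine ⟨(w / u).im, ?_⟩
  have hns : Complex.normSq u ≠ 0 := by
    simpa [Complex.normSq_eq_zero] using hu
  have hre : (w / u).re = 0 := by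
    rw [Complex.div_re]
    field_simp
    nlinarith [h]
  have hwu : w / u = ((w / u).im : ℂ) * Complex.I := by
    apply Complex.ext <;> simp [hre]
  have h2 : w = (w / u) * u := (div_mul_cancel₀ w hu).symm
  rw [hwu] at h2
  exact h2

set_option maxHeartbeats 1600000 in
/-- A 4-tuple of pairwise distinct points of the plane has all four
consecutive sides of equal length and the two diagonals of equal length if and only if it
is the tuple of vertices of a (nondegenerate) square listed in cyclic order (in one of the
two orientations). This characterizes the set `Ã`. -/
theorem square_characterization
    (x₁ x₂ x₃ x₄ : ℂ)
    (h12 : x₁ ≠ x₂) (h13 : x₁ ≠ x₃) (h14 : x₁ ≠ x₄)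
    (h23 : x₂ ≠ x₃) (h24 : x₂ ≠ x₄) (h34 : x₃ ≠ x₄) :
    (dist x₁ x₂ = dist x₂ x₃ ∧ dist x₂ x₃ = dist x₃ x₄ ∧ dist x₃ x₄ = dist x₄ x₁ ∧
      dist x₁ x₃ = dist x₂ x₄) ↔
    ∃ c u : ℂ, u ≠ 0 ∧
      ((x₁ = c + u ∧ x₂ = c + Complex.I * u ∧ x₃ = c - u ∧ x₄ = c - Complex.I * u) ∨
       (x₁ = c + u ∧ x₂ = c - Complex.I * u ∧ x₃ = c - u ∧ x₄ = c + Complex.I * u)) := by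
  constructor
  · rintro ⟨h1, h2, h3, h4⟩
    obtain ⟨c, u, w, w', hc, hu0, hw, hw'⟩ :
        ∃ c u w w' : ℂ, c = (x₁ + x₃) / 2 ∧ u = (x₁ - x₃) / 2 ∧ w = x₂ - c ∧ w' = x₄ - c :=
      ⟨_, _, _, _, rfl, rfl, rfl, rfl⟩
    have hu : u ≠ 0 := by
      rw [hu0]
      intro h
      exact h13 (by linear_combination 2 * h)
    have hx1 : x₁ = c + u := by rw [hc, hu0]; ring
    have hx3 : x₃ = c - u := by rw [hc, hu0]; ring
    have hx2 : x₂ = c + w := by rw [hw]; ring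
    have hx4 : x₄ = c + w' := by rw [hw']; ring
    have e1 : Complex.normSq (x₁ - x₂) = Complex.normSq (x₂ - x₃) := normSq_eq_of_dist h1
    have e2 : Complex.normSq (x₂ - x₃) = Complex.normSq (x₃ - x₄) := normSq_eq_of_dist h2
    have e3 : Complex.normSq (x₃ - x₄) = Complex.normSq (x₄ - x₁) := normSq_eq_of_dist h3
    have e4 : Complex.normSq (x₁ - x₃) = Complex.normSq (x₂ - x₄) := normSq_eq_of_dist h4
    simp only [hx1, hx2, hx3, hx4] at e1 e2 e3 e4
    have p1 : u.re * w.re + u.im * w.im = 0 := by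
      simp only [Complex.normSq_apply, Complex.add_re, Complex.add_im, Complex.sub_re,
        Complex.sub_im] at e1
      nlinarith [e1]
    have p2 : u.re * w'.re + u.im * w'.im = 0 := by
      simp only [Complex.normSq_apply, Complex.add_re, Complex.add_im, Complex.sub_re,
        Complex.sub_im] at e3
      nlinarith [e3]
    obtain ⟨a, ha⟩ := exists_real_of_perp hu p1
    obtain ⟨b, hb⟩ := exists_real_of_perp hu p2
    have hns : (0:ℝ) < Complex.normSq u := by
      simpa [Complex.normSq_pos] using hu
    have hab2 : a ^ 2 = b ^ 2 := by
      rw [ha, hb] at e2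
      rw [show c + (a:ℂ) * Complex.I * u - (c - u) = (1 + (a:ℂ) * Complex.I) * u by ring,
        show c - u - (c + (b:ℂ) * Complex.I * u) = (-(1 + (b:ℂ) * Complex.I)) * u by ring,
        Complex.normSq_mul, Complex.normSq_mul, Complex.normSq_neg] at e2
      have := mul_right_cancel₀ (ne_of_gt hns) e2
      simp only [Complex.normSq_apply, Complex.mul_re, Complex.mul_im, Complex.I_re, Complex.I_im, Complex.sub_re, Complex.sub_im, Complex.add_re, Complex.add_im, Complex.ofReal_re, Complex.ofReal_im, Complex.one_re, Complex.one_im, Complex.neg_re, Complex.neg_im] at this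
      nlinarith [this]
    have hdiag : (a - b) ^ 2 = 4 := by
      rw [ha, hb] at e4
      rw [show c + u - (c - u) = (2:ℂ) * u by ring,
        show c + (a:ℂ) * Complex.I * u - (c + (b:ℂ) * Complex.I * u)
          = (((a:ℂ) - b) * Complex.I) * u by ring,
        Complex.normSq_mul, Complex.normSq_mul] at e4
      have h4'' := mul_right_cancel₀ (ne_of_gt hns) e4
      simp only [Complex.normSq_apply, Complex.mul_re, Complex.mul_im, Complex.I_re, Complex.I_im, Complex.sub_re, Complex.sub_im, Complex.add_re, Complex.add_im, Complex.ofReal_re, Complex.ofReal_im, Complex.one_re, Complex.one_im, Complex.neg_re, Complex.neg_im] at h4''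
      norm_num at h4''
      linear_combination -h4''
    have hane : a ≠ b := by
      intro h
      apply h24
      rw [hx2, hx4, ha, hb, h]
    have hb' : b = -a := by
      have hmul : (a + b) * (a - b) = 0 := by linear_combination hab2
      rcases mul_eq_zero.mp hmul with h | h
      · linarith
      · exact absurd (by linarith : a = b) hane
    have ha1 : a = 1 ∨ a = -1 := by
      have ha2 : a ^ 2 = 1 := by rw [hb'] at hdiag; linear_combination hdiag / 4
      have hmul : (a - 1) * (a + 1) = 0 := by linear_combination ha2
      rcases mul_eq_zero.mp hmul with h | h
      · left; linarith
      · right; linarith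
    refine ⟨c, u, hu, ?_⟩
    rcases ha1 with h | h
    · left
      refine ⟨hx1, ?_, hx3, ?_⟩
      · rw [hx2, ha, h]; push_cast; ring
      · rw [hx4, hb, hb', h]; push_cast; ring
    · right
      refine ⟨hx1, ?_, hx3, ?_⟩
      · rw [hx2, ha, h]; push_cast; ring
      · rw [hx4, hb, hb', h]; push_cast; ring
  · rintro ⟨c, u, hu, ⟨e1, e2, e3, e4⟩ | ⟨e1, e2, e3, e4⟩⟩
    · subst e1; subst e2; subst e3; subst e4
      refine ⟨?_, ?_, ?_, ?_⟩
      all_goals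
        apply dist_eq_of_normSq
        simp only [Complex.normSq_apply, Complex.add_re, Complex.add_im, Complex.sub_re,
          Complex.sub_im, Complex.mul_re, Complex.mul_im, Complex.I_re, Complex.I_im]
        ring
    · subst e1; subst e2; subst e3; subst e4
      refine ⟨?_, ?_, ?_, ?_⟩
      all_goals
        apply dist_eq_of_normSq
        simp only [Complex.normSq_apply, Complex.add_re, Complex.add_im, Complex.sub_re,
          Complex.sub_im, Complex.mul_re, Complex.mul_im, Complex.I_re, Complex.I_im]
        ring
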